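/- If F is a p-periodic map of the form F(x,y) = (αx + f(y), y/α) with α a primitive p-th root of unity and f(0)=f'(0)=0, then the Montgomery–Bochner linearization ψ(x) = (1/p) ∑_{j=0}^{p-1} (DF(0,0))^{-j}(F^j(x)) has the form ψ(x,y) = (x + g(y), y) for some function g, and hence is a global diffeomorphism linearizing F on all of 𝕂². -/

import Mathlib

/-! Iterates of a triangular map stay triangular, `Fʲ(x,y) = (αʲx + Fʲ(0,y).1, y/αʲ)`, so the
twisted average `ψ` moves `x` by an amount depending only on `y` and fixes `y`: it is a shear,
hence bijective. It linearizes `F` by Bochner's averaging trick: on a `p`-periodic orbit,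
replacing `z` by `F z` shifts the summation index by one, and the weights `α^{∓j}` are
`p`-periodic because `α^p = 1`. -/

open Finset

theorem Finset.sum_range_succ_eq_of_eq {M : Type*} [AddCommGroup M] (u : ℕ → M) {p : ℕ}
    (h : u p = u 0) : ∑ j ∈ range p, u (j + 1) = ∑ j ∈ range p, u j :=
  add_right_cancel (b := u 0) <| by rw [← sum_range_succ', sum_range_succ, h]

theorem Function.bijective_of_apply_eq_shear {G Y : Type*} [AddGroup G] {ψ : G × Y → G × Y}
    (g : Y → G) (h : ∀ x y, ψ (x, y) = (x + g y, y)) : Function.Bijective ψ := by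
  refine Function.bijective_iff_has_inverse.mpr ⟨fun w => (w.1 - g w.2, w.2), ?_, ?_⟩ <;>
    rintro ⟨x, y⟩ <;> simp [h]

theorem mul_sum_range_pow_mul_iterate_apply {X K : Type*} [CommRing K] (F : X → X)
    (φ : X → K) {c : K} {p : ℕ} (hc : c ^ p = 1) {z : X} (hz : F^[p] z = z) :
    c * ∑ j ∈ range p, c ^ j * φ (F^[j] (F z)) = ∑ j ∈ range p, c ^ j * φ (F^[j] z) := by
  rw [mul_sum]
  simp_rw [← Function.iterate_succ_apply, ← mul_assoc, ← pow_succ']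
  exact sum_range_succ_eq_of_eq (fun j => c ^ j * φ (F^[j] z)) (by simp [hc, hz])

section Triangular

variable {K : Type*} [Field K]

def triangularMap (α : K) (f : K → K) (w : K × K) : K × K := (α * w.1 + f w.2, w.2 / α)

theorem triangularMap_iterate (α : K) (f : K → K) (j : ℕ) (x y : K) :
    (triangularMap α f)^[j] (x, y) =
      (α ^ j * x + ((triangularMap α f)^[j] (0, y)).1, y / α ^ j) := by
  induction j generalizing x with
  | zero => simp
  | succ j ih =>
    rw [Function.iterate_succ_apply', Function.iterate_succ_apply', ih x, ih 0]
    simp only [triangularMap, pow_succ, div_div]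
    ring_nf

def bochnerLinearization (α : K) (f : K → K) (p : ℕ) (z : K × K) : K × K :=
  ((p : K)⁻¹ * ∑ j ∈ range p, α⁻¹ ^ j * ((triangularMap α f)^[j] z).1,
    (p : K)⁻¹ * ∑ j ∈ range p, α ^ j * ((triangularMap α f)^[j] z).2)

variable {α : K} {p : ℕ}

theorem bochnerLinearization_mk (f : K → K) (hα : α ≠ 0) (hp : (p : K) ≠ 0) (x y : K) :
    bochnerLinearization α f p (x, y) = (x + (bochnerLinearization α f p (0, y)).1, y) := by
  have hfst : ∀ j, α⁻¹ ^ j * (α ^ j * x + ((triangularMap α f)^[j] (0, y)).1) =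
      x + α⁻¹ ^ j * ((triangularMap α f)^[j] (0, y)).1 := fun j => by
    rw [mul_add, ← mul_assoc, ← mul_pow, inv_mul_cancel₀ hα, one_pow, one_mul]
  have hsnd : ∀ j, α ^ j * (y / α ^ j) = y := fun j => mul_div_cancel₀ _ (pow_ne_zero _ hα)
  simp only [bochnerLinearization, triangularMap_iterate α f _ x, hfst, hsnd, sum_add_distrib,
    sum_const, card_range, nsmul_eq_mul, mul_add, inv_mul_cancel_left₀ hp]

theorem bochnerLinearization_triangularMap (f : K → K) (hα : α ^ p = 1) (hα0 : α ≠ 0)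
    {z : K × K} (hz : (triangularMap α f)^[p] z = z) :
    bochnerLinearization α f p (triangularMap α f z) =
      (α * (bochnerLinearization α f p z).1, (bochnerLinearization α f p z).2 / α) := by
  have hfst := mul_sum_range_pow_mul_iterate_apply _ Prod.fst (by rw [inv_pow, hα, inv_one]) hz
  have hsnd := mul_sum_range_pow_mul_iterate_apply _ Prod.snd hα hz
  simp only [bochnerLinearization, ← hfst, ← hsnd]
  refine Prod.ext ?_ ?_ <;> field_simp

end Triangular

theorem stmt_9_general {𝕂 : Type} [RCLike 𝕂] (α : 𝕂) (p : ℕ) (hp : 0 < p)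
    (hα : α ^ p = 1)
    (f : 𝕂 → 𝕂)
    (hper : ∀ z : 𝕂 × 𝕂,
      (fun w : 𝕂 × 𝕂 => (α * w.1 + f w.2, w.2 / α))^[p] z = z)
    (ψ : 𝕂 × 𝕂 → 𝕂 × 𝕂)
    (hψ : ∀ z : 𝕂 × 𝕂, ψ z = (p : 𝕂)⁻¹ •
      ∑ j ∈ Finset.range p,
        ((α⁻¹ ^ j * ((fun w : 𝕂 × 𝕂 => (α * w.1 + f w.2, w.2 / α))^[j] z).1,
          α ^ j * ((fun w : 𝕂 × 𝕂 => (α * w.1 + f w.2, w.2 / α))^[j] z).2))) :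
    (∃ g : 𝕂 → 𝕂, ∀ x y : 𝕂, ψ (x, y) = (x + g y, y)) ∧
    Function.Bijective ψ ∧
    ∀ z : 𝕂 × 𝕂, ψ (α * z.1 + f z.2, z.2 / α) = (α * (ψ z).1, (ψ z).2 / α) := by
  have hα0 : α ≠ 0 := by
    rintro rfl
    exact zero_ne_one (by rwa [zero_pow hp.ne'] at hα)
  obtain rfl : ψ = bochnerLinearization α f p := funext fun z => by
    rw [hψ z]
    ext <;> simp only [Prod.smul_fst, Prod.smul_snd, Prod.fst_sum, Prod.snd_sum, smul_eq_mul] <;>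
      rfl
  have hmk := bochnerLinearization_mk f hα0 (Nat.cast_ne_zero.mpr hp.ne')
  exact ⟨⟨_, hmk⟩, Function.bijective_of_apply_eq_shear _ hmk,
    fun z => bochnerLinearization_triangularMap f hα hα0 (hper z)⟩

/-- For a `p`-periodic triangular map `F(x,y) = (αx + f(y), y/α)` with `α` a
primitive `p`-th root of unity and `f(0) = f'(0) = 0`, the Montgomery–Bochner
linearization `ψ(x) = (1/p) ∑_{j<p} (DF(0,0))⁻ʲ(Fʲ(x))` (here
`DF(0,0) = diag(α, 1/α)`) has the form `ψ(x,y) = (x + g(y), y)`, and is a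
global diffeomorphism linearizing `F` on all of `𝕂²`. -/
theorem stmt_9 {𝕂 : Type} [RCLike 𝕂] (α : 𝕂) (p : ℕ) (hp : 0 < p)
    (hα : α ^ p = 1) (hprim : ∀ q : ℕ, 0 < q → q < p → α ^ q ≠ 1)
    (f : 𝕂 → 𝕂) (hf0 : f 0 = 0) (hf1 : deriv f 0 = 0)
    (hper : ∀ z : 𝕂 × 𝕂,
      (fun w : 𝕂 × 𝕂 => (α * w.1 + f w.2, w.2 / α))^[p] z = z)
    (ψ : 𝕂 × 𝕂 → 𝕂 × 𝕂)
    (hψ : ∀ z : 𝕂 × 𝕂, ψ z = (p : 𝕂)⁻¹ •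
      ∑ j ∈ Finset.range p,
        ((α⁻¹ ^ j * ((fun w : 𝕂 × 𝕂 => (α * w.1 + f w.2, w.2 / α))^[j] z).1,
          α ^ j * ((fun w : 𝕂 × 𝕂 => (α * w.1 + f w.2, w.2 / α))^[j] z).2))) :
    (∃ g : 𝕂 → 𝕂, ∀ x y : 𝕂, ψ (x, y) = (x + g y, y)) ∧
    Function.Bijective ψ ∧
    ∀ z : 𝕂 × 𝕂, ψ (α * z.1 + f z.2, z.2 / α) = (α * (ψ z).1, (ψ z).2 / α) :=
  stmt_9_general α p hp hα f hper ψ hψ
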